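/- arXiv:2010.14341 — 7 statements merged into one kernel-verified Lean document; each statement's English description precedes it below -/
import Mathlib

section
/- Let λ > 1, set k_n = λ^n, and let σ > 0. Consider the infinite linear system of stationarity equations: 0 = σ² − k₁² s₁ + k₁² s₂ and 0 = k_{n−1}² s_{n−1} − (k_{n−1}² + k_n²) s_n + k_n² s_{n+1} for all n ≥ 2. There is exactly one real sequence s = (s_n)_{n≥1} with Σ_{n≥1} |s_n| < ∞ satisfying these equations, namely s_n = σ² λ^{−2n} / (1 − λ^{−2}) for all n ≥ 1. Moreover this sequence satisfies Σ_{n≥1} λ^{2βn} s_n² < ∞ for every β < 1. -/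
/-!
Write `a = λ²`. The `n`-th stationarity equation says that the flux `a^n (s_n - s_{n+1})`
does not depend on `n`, and the first one fixes it to be `σ²`. So all solutions have the same
differences `s_n - s_{n+1}`, and two solutions tending to `0` coincide; the geometric sequence
`σ² a^{-n} / (1 - a^{-1})` is such a solution, and it lies in `H^β` as soon as `λ^β < λ²`.
-/

open Filter Topology

theorem eq_of_sub_succ_eq_of_tendsto_zero {G : Type*} [AddCommGroup G] [TopologicalSpace G]
    [IsTopologicalAddGroup G] [T2Space G] {f g : ℕ → G}
    (hf : Tendsto f atTop (𝓝 0)) (hg : Tendsto g atTop (𝓝 0))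
    (h : ∀ n, f n - f (n + 1) = g n - g (n + 1)) : f = g := by
  have hconst : ∀ n, (f - g) n = (f - g) 0 := by
    intro n
    induction n with
    | zero => rfl
    | succ n ih =>
      rw [← ih, Pi.sub_apply, Pi.sub_apply, sub_eq_sub_iff_sub_eq_sub.mp (h n)]
  have hlim : Tendsto (fun _ : ℕ => (f - g) 0) atTop (𝓝 0) := by
    simpa [sub_zero] using (hf.sub hg).congr hconst
  exact sub_eq_zero.mp (funext fun n => (hconst n).trans (tendsto_const_nhds_iff.mp hlim))

/-- The stationarity system with `a = λ²`, source `b = σ²`, and `s n` standing for `s_{n+1}`. -/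
def StationaryEq (a b : ℝ) (s : ℕ → ℝ) : Prop :=
  0 = b - a * s 0 + a * s 1 ∧
    ∀ n : ℕ, 0 = a ^ (n + 1) * s n - (a ^ (n + 1) + a ^ (n + 2)) * s (n + 1)
      + a ^ (n + 2) * s (n + 2)

theorem stationaryEq_iff_flux_eq (a b : ℝ) (s : ℕ → ℝ) :
    StationaryEq a b s ↔ ∀ n : ℕ, a ^ (n + 1) * (s n - s (n + 1)) = b := by
  constructor
  · rintro ⟨h0, hsucc⟩ n
    induction n with
    | zero => simpa using (by linear_combination h0 : a * (s 0 - s 1) = b)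
    | succ n ih => linear_combination ih + hsucc n
  · intro h
    exact ⟨by linear_combination h 0, fun n => by linear_combination h (n + 1) - h n⟩

noncomputable def geomSol (a b : ℝ) (n : ℕ) : ℝ := b / (a - 1) * a⁻¹ ^ n

section

variable {a : ℝ} (b : ℝ)

theorem geomSol_flux (ha : 1 < a) (n : ℕ) :
    a ^ (n + 1) * (geomSol a b n - geomSol a b (n + 1)) = b := by
  have ha0 : a ≠ 0 := by positivity
  have ha1 : a - 1 ≠ 0 := sub_ne_zero.mpr ha.ne'
  simp only [geomSol, inv_pow]
  field_simp
  ring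

theorem summable_abs_geomSol (ha : 1 < a) : Summable fun n => |geomSol a b n| :=
  ((summable_geometric_of_lt_one (by positivity) (inv_lt_one_of_one_lt₀ ha)).mul_left _).abs

theorem tendsto_geomSol (ha : 1 < a) : Tendsto (geomSol a b) atTop (𝓝 0) :=
  (summable_abs_geomSol b ha).of_abs.tendsto_atTop_zero

theorem eq_geomSol_of_flux_eq (ha : 1 < a) {s : ℕ → ℝ} (hs : Tendsto s atTop (𝓝 0))
    (hflux : ∀ n : ℕ, a ^ (n + 1) * (s n - s (n + 1)) = b) : s = geomSol a b := by
  refine eq_of_sub_succ_eq_of_tendsto_zero hs (tendsto_geomSol b ha) fun n => ?_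
  refine mul_left_cancel₀ (pow_ne_zero (n + 1) (by positivity : a ≠ 0)) ?_
  rw [hflux, geomSol_flux b ha]

theorem summable_abs_and_stationaryEq_iff (ha : 1 < a) (s : ℕ → ℝ) :
    (Summable (fun n => |s n|) ∧ StationaryEq a b s) ↔ s = geomSol a b := by
  rw [stationaryEq_iff_flux_eq]
  constructor
  · rintro ⟨hsum, hflux⟩
    exact eq_geomSol_of_flux_eq b ha hsum.of_abs.tendsto_atTop_zero hflux
  · rintro rfl
    exact ⟨summable_abs_geomSol b ha, geomSol_flux b ha⟩

end

/-- Membership in `H^β`, with `x n` standing for `x_{n+1}`. -/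
def MemH (lam β : ℝ) (x : ℕ → ℝ) : Prop :=
  Summable fun n : ℕ => lam ^ (2 * β * ((n : ℝ) + 1)) * x n ^ 2

theorem memH_geometric {lam β q : ℝ} (hlam : 0 < lam) (hq : lam ^ (2 * β) * q ^ 2 < 1)
    (c : ℝ) : MemH lam β fun n => c * q ^ n := by
  have hr : 0 ≤ lam ^ (2 * β) * q ^ 2 := by positivity
  refine ((summable_geometric_of_lt_one hr hq).mul_left (lam ^ (2 * β) * c ^ 2)).congr fun n => ?_
  have hpow : lam ^ (2 * β * ((n : ℝ) + 1)) = lam ^ (2 * β) * (lam ^ (2 * β)) ^ n := by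
    rw [← Real.rpow_natCast, ← Real.rpow_mul hlam.le, ← Real.rpow_add hlam]
    ring_nf
  rw [hpow]
  ring

theorem memH_geomSol {lam β : ℝ} (hlam : 1 < lam) (hβ : β < 1) (b : ℝ) :
    MemH lam β (geomSol (lam ^ 2) b) := by
  have hlam0 : 0 < lam := by positivity
  have hlt : lam ^ (2 * β) < lam ^ (4 : ℝ) := Real.rpow_lt_rpow_of_exponent_lt hlam (by linarith)
  refine memH_geometric hlam0 ?_ _
  rw [Real.rpow_ofNat] at hlt
  calc lam ^ (2 * β) * (lam ^ 2)⁻¹ ^ 2 < lam ^ 4 * (lam ^ 2)⁻¹ ^ 2 := by gcongr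
    _ = 1 := by field_simp

theorem mul_zpow_div_eq_geomSol {lam : ℝ} (hlam : 1 < lam) (b : ℝ) (n : ℕ) :
    b * lam ^ (-(2 * ((n : ℤ) + 1))) / (1 - lam ^ (-2 : ℤ)) = geomSol (lam ^ 2) b n := by
  have hexp : -(2 * ((n : ℤ) + 1)) = -((2 * (n + 1) : ℕ) : ℤ) := by push_cast; ring
  have ha : 1 < lam ^ 2 := one_lt_pow₀ hlam two_ne_zero
  have ha0 : lam ^ 2 ≠ 0 := by positivity
  have ha1 : lam ^ 2 - 1 ≠ 0 := sub_ne_zero.mpr ha.ne'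
  rw [hexp, zpow_neg, zpow_natCast, show (-2 : ℤ) = -((2 : ℕ) : ℤ) from rfl, zpow_neg,
    zpow_natCast, pow_mul, geomSol, pow_succ, inv_pow]
  field_simp

theorem stmt_0_general (lam σ : ℝ) (hlam : 1 < lam) :
    (∀ s : ℕ → ℝ,
      ((Summable fun n : ℕ => |s n|) ∧
        (0 = σ ^ 2 - lam ^ 2 * s 0 + lam ^ 2 * s 1) ∧
        (∀ n : ℕ, 0 = lam ^ (2 * (n + 1)) * s n
            - (lam ^ (2 * (n + 1)) + lam ^ (2 * (n + 2))) * s (n + 1)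
            + lam ^ (2 * (n + 2)) * s (n + 2)))
      ↔ (∀ n : ℕ, s n = σ ^ 2 * lam ^ (-(2 * ((n : ℤ) + 1))) / (1 - lam ^ (-2 : ℤ))))
    ∧ (∀ β : ℝ, β < 1 →
        Summable fun n : ℕ =>
          lam ^ (2 * β * ((n : ℝ) + 1)) *
            (σ ^ 2 * lam ^ (-(2 * ((n : ℤ) + 1))) / (1 - lam ^ (-2 : ℤ))) ^ 2) := by
  simp only [mul_zpow_div_eq_geomSol hlam, pow_mul]
  refine ⟨fun s => ?_, fun β hβ => memH_geomSol hlam hβ _⟩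
  exact (summable_abs_and_stationaryEq_iff _ (one_lt_pow₀ hlam two_ne_zero) s).trans funext_iff

theorem stmt_0 (lam σ : ℝ) (hlam : 1 < lam) (hσ : 0 < σ) :
    (∀ s : ℕ → ℝ,
      ((Summable fun n : ℕ => |s n|) ∧
        (0 = σ ^ 2 - lam ^ 2 * s 0 + lam ^ 2 * s 1) ∧
        (∀ n : ℕ, 0 = lam ^ (2 * (n + 1)) * s n
            - (lam ^ (2 * (n + 1)) + lam ^ (2 * (n + 2))) * s (n + 1)
            + lam ^ (2 * (n + 2)) * s (n + 2)))
      ↔ (∀ n : ℕ, s n = σ ^ 2 * lam ^ (-(2 * ((n : ℤ) + 1))) / (1 - lam ^ (-2 : ℤ))))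
    ∧ (∀ β : ℝ, β < 1 →
        Summable fun n : ℕ =>
          lam ^ (2 * β * ((n : ℝ) + 1)) *
            (σ ^ 2 * lam ^ (-(2 * ((n : ℤ) + 1))) / (1 - lam ^ (-2 : ℤ))) ^ 2) :=
  stmt_0_general lam σ hlam
end

section
/- Let λ > 1, k_n = λ^n, σ ≥ 0 and T > 0. Suppose u, v : [0,T] → ℝ^{ℕ} are two functions whose components u_n, v_n are differentiable on [0,T] and satisfy pointwise the system u₁' = σ² − k₁²u₁ + k₁²u₂ and u_n' = k_{n−1}²u_{n−1} − (k_{n−1}² + k_n²)u_n + k_n²u_{n+1} for n ≥ 2 (and the same for v), with the same initial condition u_n(0) = v_n(0) for all n ≥ 1. If moreover ∫₀ᵀ Σ_{n≥1} |u_n(t)| dt < ∞ and ∫₀ᵀ Σ_{n≥1} |v_n(t)| dt < ∞, then u_n(t) = v_n(t) for all n ≥ 1 and all t ∈ [0,T]. -/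
open NormedSpace
set_option synthInstance.maxHeartbeats 400000
set_option maxHeartbeats 1000000

noncomputable section

namespace Stmt1Aux

abbrev E (N : ℕ) := Fin N → ℝ
abbrev CL (N : ℕ) := E N →L[ℝ] E N

/-- evaluation of an operator at vector `x`, coordinate `i`, as a CLM. -/
noncomputable def ev {N : ℕ} (x : E N) (i : Fin N) : CL N →L[ℝ] ℝ :=
  (ContinuousLinearMap.proj i).comp ((ContinuousLinearMap.apply ℝ (E N)) x)

@[simp] lemma ev_apply {N : ℕ} (x : E N) (i : Fin N) (T : CL N) : ev x i T = T x i := rfl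

/-- if `B` maps the nonneg cone to itself, so does `exp (r • B)` for `r ≥ 0`. -/
lemma exp_nonneg {N : ℕ} (B : CL N) (hB : ∀ x : E N, (∀ j, 0 ≤ x j) → ∀ j, 0 ≤ (B x) j)
    {r : ℝ} (hr : 0 ≤ r) (x : E N) (hx : ∀ j, 0 ≤ x j) (i : Fin N) :
    0 ≤ (exp (r • B)) x i := by
  have hpow : ∀ k : ℕ, ∀ y : E N, (∀ j, 0 ≤ y j) → ∀ j, 0 ≤ ((B ^ k) y) j := by
    intro k
    induction k with
    | zero => intro y hy j; simpa using hy j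
    | succ k ih =>
      intro y hy j
      rw [pow_succ]
      exact ih (B y) (hB y hy) j
  have hsum := expSeries_summable' (𝕂 := ℝ) (r • B)
  have := (ev x i).map_tsum hsum
  rw [exp_eq_tsum (𝕂 := ℝ)]
  rw [show (∑' n : ℕ, ((n.factorial : ℝ)⁻¹) • (r • B) ^ n) x i
      = ev x i (∑' n : ℕ, ((n.factorial : ℝ)⁻¹) • (r • B) ^ n) from rfl, this]
  refine tsum_nonneg fun k => ?_
  have : (((k.factorial : ℝ)⁻¹) • (r • B) ^ k) x i = (k.factorial : ℝ)⁻¹ * (r ^ k * ((B ^ k) x i)) := by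
    rw [smul_pow]
    simp [ContinuousLinearMap.smul_apply]
  rw [ev_apply, this]
  have h1 : (0:ℝ) ≤ (B ^ k) x i := hpow k x hx i
  positivity

/-- monotonicity of `exp (r•B)` on the cone. -/
lemma exp_mono {N : ℕ} (B : CL N) (hB : ∀ x : E N, (∀ j, 0 ≤ x j) → ∀ j, 0 ≤ (B x) j)
    {r : ℝ} (hr : 0 ≤ r) (x y : E N) (hxy : ∀ j, x j ≤ y j) (i : Fin N) :
    (exp (r • B)) x i ≤ (exp (r • B)) y i := by
  have := exp_nonneg B hB hr (y - x) (fun j => by simpa using sub_nonneg.2 (hxy j)) i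
  rw [map_sub] at this
  simpa using sub_nonneg.1 (by simpa using this)

/-- coupling coefficients. -/
def cc (lam : ℝ) (n : ℕ) : ℝ := if n = 0 then 0 else lam ^ (2 * n)

lemma cc_nonneg {lam : ℝ} (hlam : 0 < lam) (n : ℕ) : 0 ≤ cc lam n := by
  unfold cc; split <;> positivity

lemma cc_zero (lam : ℝ) : cc lam 0 = 0 := rfl

lemma cc_pos (lam : ℝ) {n : ℕ} (hn : 1 ≤ n) : cc lam n = lam ^ (2 * n) := by
  unfold cc; rw [if_neg (by omega)]

/-- extension by zero of a vector indexed by `Fin N` to `ℕ`, with shift: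
`extz x n = x (n-1)` for `1 ≤ n ≤ N`. -/
def extz {N : ℕ} (x : E N) (n : ℕ) : ℝ :=
  if h : 1 ≤ n ∧ n ≤ N then x ⟨n - 1, by omega⟩ else 0

lemma extz_self {N : ℕ} (x : E N) (i : Fin N) : extz x ((i : ℕ) + 1) = x i := by
  have h : 1 ≤ (i:ℕ) + 1 ∧ (i:ℕ) + 1 ≤ N := ⟨le_refl _ |>.trans (by omega), by omega⟩
  rw [extz, dif_pos h]
  exact congrArg x (Fin.ext (by simp))

lemma extz_add {N : ℕ} (x y : E N) (n : ℕ) : extz (x + y) n = extz x n + extz y n := by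
  unfold extz; split <;> simp

lemma extz_smul {N : ℕ} (c : ℝ) (x : E N) (n : ℕ) : extz (c • x) n = c * extz x n := by
  unfold extz; split <;> simp

/-- the generator as a linear map on `Fin N → ℝ`; row `i` corresponds to state `n = i+1`. -/
def Amap (lam : ℝ) (N : ℕ) : E N →ₗ[ℝ] E N where
  toFun x := fun i => cc lam i * extz x i - (cc lam i + cc lam (i + 1)) * extz x (i + 1)
      + cc lam (i + 1) * extz x (i + 2)
  map_add' x y := by funext i; simp only [Pi.add_apply, extz_add]; ring
  map_smul' c x := by
    funext i
    simp only [extz_smul, RingHom.id_apply, Pi.smul_apply, smul_eq_mul]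
    ring

def Aop (lam : ℝ) (N : ℕ) : CL N := (Amap lam N).toContinuousLinearMap

lemma Aop_apply (lam : ℝ) {N : ℕ} (x : E N) (i : Fin N) :
    (Aop lam N) x i = cc lam i * extz x i - (cc lam i + cc lam (i + 1)) * extz x (i + 1)
      + cc lam (i + 1) * extz x (i + 2) := rfl

/-- total jump rate bound. -/
def KK (lam : ℝ) (N : ℕ) : ℝ := lam ^ (2 * N) + lam ^ (2 * (N + 1))

def Bop (lam : ℝ) (N : ℕ) : CL N := Aop lam N + KK lam N • (1 : CL N)

lemma Bop_apply (lam : ℝ) {N : ℕ} (x : E N) (i : Fin N) :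
    (Bop lam N) x i = (Aop lam N) x i + KK lam N * x i := rfl

lemma cc_le {lam : ℝ} (hlam : 1 ≤ lam) {n M : ℕ} (h : n ≤ M) : cc lam n ≤ lam ^ (2 * M) := by
  unfold cc
  split
  · positivity
  · exact pow_le_pow_right₀ hlam (by omega)

lemma Bop_cone {lam : ℝ} (hlam : 1 ≤ lam) {N : ℕ} (x : E N) (hx : ∀ j, 0 ≤ x j) (j : Fin N) :
    0 ≤ (Bop lam N) x j := by
  have h0 : (0:ℝ) < lam := lt_of_lt_of_le one_pos hlam
  have hext : ∀ n, 0 ≤ extz x n := by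
    intro n; unfold extz; split
    · exact hx _
    · exact le_refl 0
  rw [Bop_apply, Aop_apply]
  have h1 : cc lam j * extz x j ≥ 0 := mul_nonneg (cc_nonneg h0 _) (hext _)
  have h2 : cc lam (j + 1) * extz x (j + 2) ≥ 0 := mul_nonneg (cc_nonneg h0 _) (hext _)
  have h3 : extz x ((j:ℕ) + 1) = x j := extz_self x j
  have h4 : cc lam j + cc lam ((j:ℕ) + 1) ≤ KK lam N := by
    have := cc_le hlam (show (j:ℕ) ≤ N by omega)
    have := cc_le hlam (show (j:ℕ) + 1 ≤ N + 1 by omega)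
    unfold KK; linarith
  have h5 : (cc lam j + cc lam ((j:ℕ) + 1)) * x j ≤ KK lam N * x j :=
    mul_le_mul_of_nonneg_right h4 (hx j)
  rw [h3]
  linarith

lemma hasDerivAt_expB {N : ℕ} (B : CL N) (x : E N) (i : Fin N) (r : ℝ) :
    HasDerivAt (fun r : ℝ => (exp (r • B)) x i) ((exp (r • B)) (B x) i) r := by
  have h := hasDerivAt_exp_smul_const (𝕂 := ℝ) B r
  have h2 := ((ev x i).hasFDerivAt.comp_hasDerivAt r h)
  simpa [ev, ContinuousLinearMap.mul_apply, Function.comp_def] using h2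

/-- the backward test function, vector form. -/
def phiVec (lam : ℝ) (N : ℕ) (x : E N) (r : ℝ) : E N :=
  Real.exp (-(KK lam N * r)) • ((exp (r • Bop lam N)) x)

lemma Aop_phiVec (lam : ℝ) (N : ℕ) (x : E N) (r : ℝ) :
    (Aop lam N) (phiVec lam N x r)
      = Real.exp (-(KK lam N * r)) • ((exp (r • Bop lam N)) ((Aop lam N) x)) := by
  have hcomm : Commute (Bop lam N) (exp (r • Bop lam N)) :=
    ((Commute.refl (Bop lam N)).smul_right r).exp_right
  have hBA : (Bop lam N) ((exp (r • Bop lam N)) x)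
      = (exp (r • Bop lam N)) ((Bop lam N) x) := by
    have := congrArg (fun (T : CL N) => T x) hcomm.eq
    simpa [ContinuousLinearMap.mul_apply] using this
  have hA : Aop lam N = Bop lam N - KK lam N • (1 : CL N) := by
    unfold Bop; abel
  rw [hA]
  funext i
  have hx := congrFun hBA i
  simp only [ContinuousLinearMap.sub_apply, ContinuousLinearMap.smul_apply,
    ContinuousLinearMap.one_apply, map_sub, map_smul, Pi.smul_apply, Pi.sub_apply, smul_eq_mul,
    phiVec]
  rw [hx]

lemma hasDerivAt_phiVec (lam : ℝ) (N : ℕ) (x : E N) (i : Fin N) (r : ℝ) :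
    HasDerivAt (fun r : ℝ => phiVec lam N x r i) ((Aop lam N) (phiVec lam N x r) i) r := by
  have h1 : HasDerivAt (fun r : ℝ => Real.exp (-(KK lam N * r)))
      (Real.exp (-(KK lam N * r)) * (-(KK lam N))) r := by
    have : HasDerivAt (fun r : ℝ => -(KK lam N * r)) (-(KK lam N)) r := by
      simpa [Pi.neg_def] using ((hasDerivAt_id r).const_mul (KK lam N)).neg
    exact this.exp
  have h2 := hasDerivAt_expB (Bop lam N) x i r
  have h3 := h1.mul h2
  have : HasDerivAt (fun r : ℝ => phiVec lam N x r i)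
      (Real.exp (-(KK lam N * r)) * (-(KK lam N)) * ((exp (r • Bop lam N)) x i)
        + Real.exp (-(KK lam N * r)) * ((exp (r • Bop lam N)) ((Bop lam N) x) i)) r := by
    simpa [phiVec, Pi.mul_def] using h3
  convert this using 1
  rw [Aop_phiVec]
  simp only [phiVec, Pi.smul_apply, smul_eq_mul, Bop_apply, map_add, map_smul]
  have : (Aop lam N) x = (Bop lam N) x - KK lam N • x := by
    have hA : Aop lam N = Bop lam N - KK lam N • (1 : CL N) := by unfold Bop; abel
    rw [hA]; rfl
  rw [this]
  simp only [map_sub, map_smul, Pi.sub_apply, Pi.smul_apply, smul_eq_mul]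
  ring

lemma le_of_deriv_nonpos {g G : ℝ → ℝ} (hg : ∀ r, HasDerivAt g (G r) r)
    (hG : ∀ r, 0 ≤ r → G r ≤ 0) {r : ℝ} (hr : 0 ≤ r) : g r ≤ g 0 := by
  have cont : ContinuousOn g (Set.Ici (0:ℝ)) := fun s _ => (hg s).continuousAt.continuousWithinAt
  have hd : DifferentiableOn ℝ g (interior (Set.Ici (0:ℝ))) :=
    fun s _ => (hg s).differentiableAt.differentiableWithinAt
  have anti : AntitoneOn g (Set.Ici (0:ℝ)) := by
    refine antitoneOn_of_deriv_nonpos (convex_Ici 0) cont hd ?_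
    intro s hs
    rw [(hg s).deriv]
    exact hG s (le_of_lt (by simpa [interior_Ici] using hs))
  exact anti Set.self_mem_Ici (Set.mem_Ici.2 hr) hr

lemma phiVec_nonneg {lam : ℝ} (hlam : 1 ≤ lam) {N : ℕ} (x : E N) (hx : ∀ j, 0 ≤ x j)
    {r : ℝ} (hr : 0 ≤ r) (i : Fin N) : 0 ≤ phiVec lam N x r i := by
  have := exp_nonneg (Bop lam N) (fun y hy => Bop_cone hlam y hy) hr x hx i
  unfold phiVec
  simp only [Pi.smul_apply, smul_eq_mul]
  positivity

lemma phiVec_le {lam : ℝ} (hlam : 1 ≤ lam) {N : ℕ} (x H : E N) (hxH : ∀ j, x j ≤ H j)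
    (hAH : ∀ j, (Aop lam N) H j ≤ 0) {r : ℝ} (hr : 0 ≤ r) (i : Fin N) :
    phiVec lam N x r i ≤ H i := by
  have hmono : phiVec lam N x r i ≤ phiVec lam N H r i := by
    unfold phiVec
    simp only [Pi.smul_apply, smul_eq_mul]
    have := exp_mono (Bop lam N) (fun y hy => Bop_cone hlam y hy) hr x H hxH i
    have he : (0:ℝ) ≤ Real.exp (-(KK lam N * r)) := (Real.exp_pos _).le
    exact mul_le_mul_of_nonneg_left this he
  refine hmono.trans ?_
  have hg : ∀ s : ℝ, HasDerivAt (fun s => phiVec lam N H s i)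
      ((Aop lam N) (phiVec lam N H s) i) s := fun s => hasDerivAt_phiVec lam N H i s
  have hG : ∀ s : ℝ, 0 ≤ s → (Aop lam N) (phiVec lam N H s) i ≤ 0 := by
    intro s hs
    rw [Aop_phiVec]
    simp only [Pi.smul_apply, smul_eq_mul]
    have hnn := exp_nonneg (Bop lam N) (fun y hy => Bop_cone hlam y hy) hs
      (-(Aop lam N) H) (fun j => by simpa using hAH j) i
    rw [map_neg] at hnn
    simp only [Pi.neg_apply] at hnn
    have : (exp (s • Bop lam N)) ((Aop lam N) H) i ≤ 0 := by linarith
    have he : (0:ℝ) ≤ Real.exp (-(KK lam N * s)) := (Real.exp_pos _).le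
    exact mul_nonpos_of_nonneg_of_nonpos he this
  have := le_of_deriv_nonpos hg hG hr
  refine this.trans ?_
  unfold phiVec
  simp [exp_zero]

/-- the supersolution profile. -/
def hh (lam : ℝ) (m n : ℕ) : ℝ := if n ≤ m then 1 else lam ^ (2 * m) / lam ^ (2 * n)

lemma hh_nonneg {lam : ℝ} (hlam : 0 < lam) (m n : ℕ) : 0 ≤ hh lam m n := by
  unfold hh; split
  · norm_num
  · positivity

lemma hh_le_one {lam : ℝ} (hlam : 1 ≤ lam) (m n : ℕ) : hh lam m n ≤ 1 := by
  unfold hh; split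
  · exact le_refl 1
  · next h =>
    rw [div_le_one (by positivity)]
    exact pow_le_pow_right₀ hlam (by omega)

lemma hh_of_ge {lam : ℝ} (hlam : 0 < lam) {m n : ℕ} (h : m ≤ n) :
    hh lam m n = lam ^ (2 * m) / lam ^ (2 * n) := by
  unfold hh; split
  · next h2 =>
    have : n = m := le_antisymm h2 h
    subst this
    rw [div_self (by positivity)]
  · rfl

lemma hh_of_le {lam : ℝ} {m n : ℕ} (h : n ≤ m) : hh lam m n = 1 := if_pos h

lemma hh_step {lam : ℝ} (hlam : 1 < lam) {m : ℕ} (hm : 1 ≤ m) (i : ℕ) :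
    cc lam i * hh lam m i - (cc lam i + cc lam (i + 1)) * hh lam m (i + 1)
      + cc lam (i + 1) * hh lam m (i + 2) ≤ 0 := by
  have h0 : (0:ℝ) < lam := lt_trans one_pos hlam
  rcases le_or_gt (i + 1) m with hc | hc
  · -- flat region
    rw [hh_of_le hc, hh_of_le (by omega : i ≤ m)]
    have h1 : hh lam m (i + 2) ≤ 1 := hh_le_one hlam.le m (i + 2)
    have h2 : 0 ≤ cc lam (i + 1) := cc_nonneg h0 _
    nlinarith
  · -- m ≤ i
    have hmi : m ≤ i := by omega
    have h1 : 1 ≤ i := le_trans hm hmi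
    rw [hh_of_ge h0 hmi, hh_of_ge h0 (by omega : m ≤ i + 1), hh_of_ge h0 (by omega : m ≤ i + 2),
      cc_pos lam h1, cc_pos lam (by omega : 1 ≤ i + 1)]
    have e1 : lam ^ (2 * (i + 1)) = lam ^ (2 * i) * lam ^ 2 := by
      rw [← pow_add]; ring_nf
    have e2 : lam ^ (2 * (i + 2)) = lam ^ (2 * i) * lam ^ 2 * lam ^ 2 := by
      rw [← pow_add, ← pow_add]; ring_nf
    rw [e1, e2]
    have ha : lam ^ (2 * i) ≠ 0 := by positivity
    have hb : lam ^ 2 ≠ 0 := by positivity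
    have : lam ^ (2 * i) * (lam ^ (2 * m) / lam ^ (2 * i))
        - (lam ^ (2 * i) + lam ^ (2 * i) * lam ^ 2) * (lam ^ (2 * m) / (lam ^ (2 * i) * lam ^ 2))
        + lam ^ (2 * i) * lam ^ 2 * (lam ^ (2 * m) / (lam ^ (2 * i) * lam ^ 2 * lam ^ 2)) = 0 := by
      field_simp
      ring
    linarith

lemma AopH_nonpos {lam : ℝ} (hlam : 1 < lam) {m : ℕ} (hm : 1 ≤ m) {N : ℕ} (i : Fin N) :
    (Aop lam N) (fun j : Fin N => hh lam m ((j : ℕ) + 1)) i ≤ 0 := by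
  have h0 : (0:ℝ) < lam := lt_trans one_pos hlam
  set H : E N := fun j : Fin N => hh lam m ((j : ℕ) + 1) with hH
  have hext : ∀ n : ℕ, 1 ≤ n → n ≤ N → extz H n = hh lam m n := by
    intro n h1 h2
    rw [extz, dif_pos ⟨h1, h2⟩, hH]
    simp only
    congr 1
    omega
  have t1 : cc lam i * extz H i = cc lam i * hh lam m i := by
    rcases Nat.eq_zero_or_pos (i : ℕ) with h | h
    · rw [h, cc_zero]; ring
    · rw [hext i h (by omega)]
  have t2 : extz H ((i : ℕ) + 1) = hh lam m ((i : ℕ) + 1) := hext _ (by omega) (by omega)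
  have t3 : cc lam ((i : ℕ) + 1) * extz H ((i : ℕ) + 2)
      ≤ cc lam ((i : ℕ) + 1) * hh lam m ((i : ℕ) + 2) := by
    rcases le_or_gt ((i : ℕ) + 2) N with h | h
    · rw [hext _ (by omega) h]
    · rw [extz, dif_neg (by omega)]
      simp only [mul_zero]
      exact mul_nonneg (cc_nonneg h0 _) (hh_nonneg h0 _ _)
  rw [Aop_apply, t2]
  calc cc lam i * extz H i - (cc lam i + cc lam ((i:ℕ) + 1)) * hh lam m ((i:ℕ) + 1)
        + cc lam ((i:ℕ) + 1) * extz H ((i:ℕ) + 2)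
      ≤ cc lam i * hh lam m i - (cc lam i + cc lam ((i:ℕ) + 1)) * hh lam m ((i:ℕ) + 1)
        + cc lam ((i:ℕ) + 1) * hh lam m ((i:ℕ) + 2) := by rw [t1]; linarith
    _ ≤ 0 := hh_step hlam hm i

/-- the summation-by-parts/telescoping identity. -/
lemma telescope (c p q : ℕ → ℝ) (N : ℕ) (hc0 : c 0 = 0) (hpN : p (N + 1) = 0) :
    ∑ i ∈ Finset.range N,
      (-(c i * p i - (c i + c (i + 1)) * p (i + 1) + c (i + 1) * p (i + 2)) * q (i + 1)
        + p (i + 1) * (c i * q i - (c i + c (i + 1)) * q (i + 1) + c (i + 1) * q (i + 2)))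
      = c N * p N * q (N + 1) := by
  have key : ∀ i : ℕ,
      (-(c i * p i - (c i + c (i + 1)) * p (i + 1) + c (i + 1) * p (i + 2)) * q (i + 1)
        + p (i + 1) * (c i * q i - (c i + c (i + 1)) * q (i + 1) + c (i + 1) * q (i + 2)))
      = (fun n => c n * (p (n + 1) * q n - q (n + 1) * p n)) i
        - (fun n => c n * (p (n + 1) * q n - q (n + 1) * p n)) (i + 1) := by
    intro i; simp only; ring
  rw [Finset.sum_congr rfl fun i _ => key i, Finset.sum_range_sub']
  simp only [hc0, hpN]
  ring

lemma extz_mk {N : ℕ} (x : E N) (i : ℕ) (hi : i < N) : extz x (i + 1) = x ⟨i, hi⟩ := by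
  rw [extz, dif_pos ⟨by omega, by omega⟩]
  exact congrArg x (Fin.ext (by simp))

open intervalIntegral in
/-- the key estimate. -/
lemma key_estimate {lam T : ℝ} (hlam : 1 < lam) (w : ℕ → ℝ → ℝ)
    (hw : ∀ i : ℕ, ∀ t ∈ Set.Icc (0:ℝ) T, HasDerivAt (w (i + 1))
      (cc lam i * w i t - (cc lam i + cc lam (i + 1)) * w (i + 1) t
        + cc lam (i + 1) * w (i + 2) t) t)
    (hw0 : ∀ n : ℕ, 1 ≤ n → w n 0 = 0)
    {m N : ℕ} (hm : 1 ≤ m) (hmN : m ≤ N)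
    {t₀ : ℝ} (ht₀ : t₀ ∈ Set.Icc (0:ℝ) T) :
    |w m t₀| ≤ lam ^ (2 * m) * ∫ s in (0:ℝ)..t₀, |w (N + 1) s| := by
  have h0 : (0:ℝ) < lam := lt_trans one_pos hlam
  obtain ⟨ht0, htT⟩ := ht₀
  have hN1 : 1 ≤ N := le_trans hm hmN
  have hmN' : m - 1 < N := by omega
  set x0 : E N := Pi.single ⟨m - 1, hmN'⟩ 1 with hx0
  set φ : ℝ → ℕ → ℝ := fun s n => extz (phiVec lam N x0 (t₀ - s)) n with hφ
  -- derivative of φ at interior coordinates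
  have hφd : ∀ (i : ℕ) (hi : i < N) (s : ℝ),
      HasDerivAt (fun s => φ s (i + 1))
        (-(cc lam i * φ s i - (cc lam i + cc lam (i + 1)) * φ s (i + 1)
          + cc lam (i + 1) * φ s (i + 2))) s := by
    intro i hi s
    have hinner : HasDerivAt (fun s : ℝ => t₀ - s) (-1) s := by
      simpa [Pi.sub_def] using (hasDerivAt_const s t₀).sub (hasDerivAt_id s)
    have hcomp := (hasDerivAt_phiVec lam N x0 ⟨i, hi⟩ (t₀ - s)).comp s hinner
    have heq : (fun s : ℝ => φ s (i + 1))
        = ((fun r => phiVec lam N x0 r ⟨i, hi⟩) ∘ fun s : ℝ => t₀ - s) := by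
      funext s'
      simp only [Function.comp_apply, hφ]
      rw [extz_mk]
    rw [heq]
    refine hcomp.congr_deriv ?_
    rw [Aop_apply]
    have hcast : ((⟨i, hi⟩ : Fin N) : ℕ) = i := rfl
    rw [hcast]
    ring
  -- bounds on φ
  have hφb : ∀ s ∈ Set.Icc (0:ℝ) t₀, ∀ n : ℕ, 0 ≤ φ s n ∧ φ s n ≤ hh lam m n := by
    intro s hs n
    have hr : 0 ≤ t₀ - s := by have := hs.2; linarith
    have hx0nn : ∀ j : Fin N, 0 ≤ x0 j := by
      intro j
      rw [hx0]
      rcases eq_or_ne j ⟨m - 1, hmN'⟩ with h | h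
      · rw [h, Pi.single_eq_same]; norm_num
      · rw [Pi.single_eq_of_ne h]
    rw [hφ]
    simp only
    unfold extz
    split
    · next h =>
      constructor
      · exact phiVec_nonneg hlam.le x0 hx0nn hr _
      · have hle := phiVec_le hlam.le x0 (fun j : Fin N => hh lam m ((j : ℕ) + 1))
          (fun j => ?_) (fun j => AopH_nonpos hlam hm j) hr ⟨n - 1, by omega⟩
        · refine hle.trans ?_
          have : (n - 1) + 1 = n := by omega
          rw [this]
        · rcases eq_or_ne j ⟨m - 1, hmN'⟩ with hj | hj
          · rw [hx0, hj, Pi.single_eq_same]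
            show (1:ℝ) ≤ hh lam m (((⟨m - 1, hmN'⟩ : Fin N) : ℕ) + 1)
            have hval : ((⟨m - 1, hmN'⟩ : Fin N) : ℕ) + 1 = m := by simp; omega
            rw [hval, hh_of_le (le_refl m)]
          · rw [hx0, Pi.single_eq_of_ne hj]
            exact hh_nonneg h0 _ _
    · exact ⟨le_refl 0, hh_nonneg h0 _ _⟩
  -- terminal value of φ
  have hφt : ∀ (i : ℕ) (hi : i < N), φ t₀ (i + 1) = x0 ⟨i, hi⟩ := by
    intro i hi
    rw [hφ]
    simp only
    rw [extz_mk _ _ hi]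
    unfold phiVec
    simp [exp_zero]
  -- the pairing function
  set F : ℝ → ℝ := fun s => ∑ i ∈ Finset.range N, φ s (i + 1) * w (i + 1) s with hF
  have hFd : ∀ s ∈ Set.Icc (0:ℝ) T,
      HasDerivAt F (cc lam N * φ s N * w (N + 1) s) s := by
    intro s hs
    have hterm : ∀ i ∈ Finset.range N,
        HasDerivAt (fun s => φ s (i + 1) * w (i + 1) s)
          (-(cc lam i * φ s i - (cc lam i + cc lam (i + 1)) * φ s (i + 1)
              + cc lam (i + 1) * φ s (i + 2)) * w (i + 1) s
            + φ s (i + 1) * (cc lam i * w i s - (cc lam i + cc lam (i + 1)) * w (i + 1) s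
              + cc lam (i + 1) * w (i + 2) s)) s := by
      intro i hi
      exact (hφd i (Finset.mem_range.1 hi) s).mul (hw i s hs)
    have hsum := HasDerivAt.sum hterm
    rw [telescope (cc lam) (φ s) (fun n => w n s) N (cc_zero lam) ?hpN] at hsum
    · rw [Finset.sum_fn] at hsum
      exact hsum
    case hpN =>
      rw [hφ]
      simp only
      rw [extz, dif_neg (by omega)]
  -- continuity facts
  have hφcont : ∀ (i : ℕ) (hi : i < N), Continuous (fun s => φ s (i + 1)) := by
    intro i hi
    exact continuous_iff_continuousAt.2 fun s => (hφd i hi s).continuousAt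
  have hwcont : ContinuousOn (w (N + 1)) (Set.Icc (0:ℝ) T) :=
    fun t ht => (hw N t ht).continuousAt.continuousWithinAt
  have huIcc : Set.uIcc (0:ℝ) t₀ = Set.Icc 0 t₀ := Set.uIcc_of_le ht0
  have hsub : Set.Icc (0:ℝ) t₀ ⊆ Set.Icc 0 T := Set.Icc_subset_Icc (le_refl 0) htT
  have hNsub : N - 1 + 1 = N := by omega
  have hGcont : ContinuousOn (fun s => cc lam N * φ s N * w (N + 1) s) (Set.Icc (0:ℝ) t₀) := by
    have h1 : Continuous (fun s => φ s N) := by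
      have := hφcont (N - 1) (by omega)
      rwa [hNsub] at this
    exact (continuous_const.mul h1).continuousOn.mul (hwcont.mono hsub)
  have hGint : IntervalIntegrable (fun s => cc lam N * φ s N * w (N + 1) s)
      MeasureTheory.volume 0 t₀ := by
    apply ContinuousOn.intervalIntegrable
    rwa [huIcc]
  -- FTC
  have hFTC : ∫ s in (0:ℝ)..t₀, cc lam N * φ s N * w (N + 1) s = F t₀ - F 0 := by
    apply intervalIntegral.integral_eq_sub_of_hasDerivAt
    · intro s hs
      exact hFd s (hsub (huIcc ▸ hs))
    · exact hGint
  -- endpoints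
  have hF0 : F 0 = 0 := by
    rw [hF]
    simp only
    apply Finset.sum_eq_zero
    intro i hi
    rw [hw0 (i + 1) (by omega), mul_zero]
  have hFt : F t₀ = w m t₀ := by
    rw [hF]
    simp only
    rw [Finset.sum_eq_single (m - 1)]
    · have h1 := hφt (m - 1) hmN'
      rw [h1, hx0, Pi.single_eq_same]
      have : m - 1 + 1 = m := by omega
      rw [this, one_mul]
    · intro i hi hne
      rw [hφt i (Finset.mem_range.1 hi), hx0,
        Pi.single_eq_of_ne (by simpa [Fin.ext_iff] using hne), zero_mul]
    · intro h
      exact absurd (Finset.mem_range.2 hmN') h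
  -- put together
  have hw_eq : w m t₀ = ∫ s in (0:ℝ)..t₀, cc lam N * φ s N * w (N + 1) s := by
    rw [hFTC, hF0, hFt, sub_zero]
  rw [hw_eq]
  -- bound the integral
  have hb : ∀ s ∈ Set.Icc (0:ℝ) t₀,
      |cc lam N * φ s N * w (N + 1) s| ≤ lam ^ (2 * m) * |w (N + 1) s| := by
    intro s hs
    have hφs := hφb s hs N
    have hccN : cc lam N = lam ^ (2 * N) := cc_pos lam hN1
    have hkey : cc lam N * φ s N ≤ lam ^ (2 * m) := by
      have h2 : cc lam N * φ s N ≤ cc lam N * hh lam m N :=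
        mul_le_mul_of_nonneg_left hφs.2 (cc_nonneg h0 N)
      have h3 : cc lam N * hh lam m N = lam ^ (2 * m) := by
        rw [hccN, hh_of_ge h0 hmN]
        field_simp
      linarith
    have hnn : 0 ≤ cc lam N * φ s N := mul_nonneg (cc_nonneg h0 N) hφs.1
    rw [abs_mul, abs_of_nonneg hnn]
    exact mul_le_mul_of_nonneg_right hkey (abs_nonneg _) |>.trans
      (mul_le_mul_of_nonneg_right (le_refl _) (abs_nonneg _))
  have habs : |∫ s in (0:ℝ)..t₀, cc lam N * φ s N * w (N + 1) s|
      ≤ ∫ s in (0:ℝ)..t₀, |cc lam N * φ s N * w (N + 1) s| := by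
    simpa only [Real.norm_eq_abs] using
      intervalIntegral.norm_integral_le_integral_norm (f := fun s => cc lam N * φ s N * w (N + 1) s) (μ := MeasureTheory.volume) (a := (0:ℝ)) (b := t₀) ht0
  refine habs.trans ?_
  have hint1 : IntervalIntegrable (fun s => |cc lam N * φ s N * w (N + 1) s|)
      MeasureTheory.volume 0 t₀ := hGint.abs
  have hint2 : IntervalIntegrable (fun s => lam ^ (2 * m) * |w (N + 1) s|)
      MeasureTheory.volume 0 t₀ := by
    apply ContinuousOn.intervalIntegrable
    rw [huIcc]
    exact (continuous_const.continuousOn.mul ((hwcont.mono hsub).abs))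
  have := intervalIntegral.integral_mono_on ht0 hint1 hint2 hb
  refine this.trans ?_
  rw [intervalIntegral.integral_const_mul]

end Stmt1Aux

end

open Stmt1Aux MeasureTheory Filter

/- STATEMENT 1.
Uniqueness, in the class `L¹([0,T]; ℓ¹(ℝ))`, of componentwise-differentiable solutions of
the forward system `u₁' = σ² − k₁²u₁ + k₁²u₂`,
`u_n' = k_{n−1}²u_{n−1} − (k_{n−1}² + k_n²)u_n + k_n²u_{n+1}` (n ≥ 2), where `k_n = lam^n`.
`u n` is the `n`-th component (only indices `n ≥ 1` are relevant). -/
theorem stmt_1 (lam σ T : ℝ) (hlam : 1 < lam) (hσ : 0 ≤ σ) (hT : 0 < T)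
    (u v : ℕ → ℝ → ℝ)
    (hu1 : ∀ t ∈ Set.Icc (0 : ℝ) T,
      HasDerivAt (u 1) (σ ^ 2 - lam ^ 2 * u 1 t + lam ^ 2 * u 2 t) t)
    (hun : ∀ n : ℕ, ∀ t ∈ Set.Icc (0 : ℝ) T,
      HasDerivAt (u (n + 2))
        (lam ^ (2 * (n + 1)) * u (n + 1) t
          - (lam ^ (2 * (n + 1)) + lam ^ (2 * (n + 2))) * u (n + 2) t
          + lam ^ (2 * (n + 2)) * u (n + 3) t) t)
    (hv1 : ∀ t ∈ Set.Icc (0 : ℝ) T,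
      HasDerivAt (v 1) (σ ^ 2 - lam ^ 2 * v 1 t + lam ^ 2 * v 2 t) t)
    (hvn : ∀ n : ℕ, ∀ t ∈ Set.Icc (0 : ℝ) T,
      HasDerivAt (v (n + 2))
        (lam ^ (2 * (n + 1)) * v (n + 1) t
          - (lam ^ (2 * (n + 1)) + lam ^ (2 * (n + 2))) * v (n + 2) t
          + lam ^ (2 * (n + 2)) * v (n + 3) t) t)
    (hinit : ∀ n : ℕ, 1 ≤ n → u n 0 = v n 0)
    (huint : ∫⁻ t in Set.Icc (0 : ℝ) T, ∑' n : ℕ, ENNReal.ofReal |u (n + 1) t| < ⊤)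
    (hvint : ∫⁻ t in Set.Icc (0 : ℝ) T, ∑' n : ℕ, ENNReal.ofReal |v (n + 1) t| < ⊤) :
    ∀ n : ℕ, 1 ≤ n → ∀ t ∈ Set.Icc (0 : ℝ) T, u n t = v n t := by
  intro m hm t ht
  set w : ℕ → ℝ → ℝ := fun k t => u k t - v k t with hwdef
  -- continuity of components
  have hucont : ∀ k : ℕ, 1 ≤ k → ContinuousOn (u k) (Set.Icc (0:ℝ) T) := by
    intro k hk
    match k, hk with
    | 1, _ => exact fun s hs => (hu1 s hs).continuousAt.continuousWithinAt
    | (i+2), _ => exact fun s hs => (hun i s hs).continuousAt.continuousWithinAt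
  have hvcont : ∀ k : ℕ, 1 ≤ k → ContinuousOn (v k) (Set.Icc (0:ℝ) T) := by
    intro k hk
    match k, hk with
    | 1, _ => exact fun s hs => (hv1 s hs).continuousAt.continuousWithinAt
    | (i+2), _ => exact fun s hs => (hvn i s hs).continuousAt.continuousWithinAt
  have hwcont : ∀ k : ℕ, 1 ≤ k → ContinuousOn (w k) (Set.Icc (0:ℝ) T) :=
    fun k hk => (hucont k hk).sub (hvcont k hk)
  -- the difference solves the homogeneous system
  have hw : ∀ i : ℕ, ∀ s ∈ Set.Icc (0:ℝ) T, HasDerivAt (w (i + 1))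
      (cc lam i * w i s - (cc lam i + cc lam (i + 1)) * w (i + 1) s
        + cc lam (i + 1) * w (i + 2) s) s := by
    intro i s hs
    match i with
    | 0 =>
      have h := (hu1 s hs).sub (hv1 s hs)
      refine h.congr_deriv ?_
      rw [cc_zero, cc_pos lam (le_refl 1)]
      simp only [hwdef]
      ring
    | (i+1) =>
      have h := (hun i s hs).sub (hvn i s hs)
      refine h.congr_deriv ?_
      rw [cc_pos lam (by omega : 1 ≤ i + 1), cc_pos lam (by omega : 1 ≤ i + 2)]
      simp only [hwdef]
      ring
  have hw0 : ∀ k : ℕ, 1 ≤ k → w k 0 = 0 := by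
    intro k hk
    simp only [hwdef]
    rw [hinit k hk, sub_self]
  obtain ⟨ht0, htT⟩ := ht
  -- lintegral tail bounds
  set aa : ℕ → ENNReal := fun k => ∫⁻ s in Set.Icc (0:ℝ) T, ENNReal.ofReal |u k s| with haa
  set bb : ℕ → ENNReal := fun k => ∫⁻ s in Set.Icc (0:ℝ) T, ENNReal.ofReal |v k s| with hbb
  have hameas : ∀ n : ℕ, AEMeasurable (fun s => ENNReal.ofReal |u (n+1) s|)
      (volume.restrict (Set.Icc (0:ℝ) T)) := fun n =>
    ((hucont (n+1) (by omega)).abs.aemeasurable measurableSet_Icc).ennreal_ofReal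
  have hbmeas : ∀ n : ℕ, AEMeasurable (fun s => ENNReal.ofReal |v (n+1) s|)
      (volume.restrict (Set.Icc (0:ℝ) T)) := fun n =>
    ((hvcont (n+1) (by omega)).abs.aemeasurable measurableSet_Icc).ennreal_ofReal
  have hatsum : ∑' n : ℕ, aa (n+1) ≠ ⊤ := by
    rw [haa, ← lintegral_tsum hameas]
    exact huint.ne
  have hbtsum : ∑' n : ℕ, bb (n+1) ≠ ⊤ := by
    rw [hbb, ← lintegral_tsum hbmeas]
    exact hvint.ne
  have hafin : ∀ n : ℕ, aa (n+1) + bb (n+1) ≠ ⊤ := by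
    intro n
    have h1 : aa (n+1) ≤ ∑' n : ℕ, aa (n+1) := ENNReal.le_tsum n
    have h2 : bb (n+1) ≤ ∑' n : ℕ, bb (n+1) := ENNReal.le_tsum n
    exact ENNReal.add_ne_top.2 ⟨ne_top_of_le_ne_top hatsum h1, ne_top_of_le_ne_top hbtsum h2⟩
  -- interval integral bound by lintegrals
  have hbound : ∀ n : ℕ, ∫ s in (0:ℝ)..t, |w (n+1) s| ≤ (aa (n+1) + bb (n+1)).toReal := by
    intro n
    have hsub : Set.Ioc (0:ℝ) t ⊆ Set.Icc (0:ℝ) T :=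
      Set.Ioc_subset_Icc_self.trans (Set.Icc_subset_Icc_right htT)
    have h1 : ∫ s in (0:ℝ)..t, |w (n+1) s| = ∫ s in Set.Ioc (0:ℝ) t, |w (n+1) s| :=
      intervalIntegral.integral_of_le ht0
    have hmeas : AEStronglyMeasurable (fun s => |w (n+1) s|)
        (volume.restrict (Set.Ioc (0:ℝ) t)) :=
      (((hwcont (n+1) (by omega)).mono hsub).abs).aestronglyMeasurable measurableSet_Ioc
    have h2 : ∫ s in Set.Ioc (0:ℝ) t, |w (n+1) s|
        = (∫⁻ s in Set.Ioc (0:ℝ) t, ENNReal.ofReal |w (n+1) s|).toReal :=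
      integral_eq_lintegral_of_nonneg_ae (Filter.Eventually.of_forall fun s => abs_nonneg _) hmeas
    have h3 : (∫⁻ s in Set.Ioc (0:ℝ) t, ENNReal.ofReal |w (n+1) s|) ≤ aa (n+1) + bb (n+1) := by
      calc (∫⁻ s in Set.Ioc (0:ℝ) t, ENNReal.ofReal |w (n+1) s|)
          ≤ ∫⁻ s in Set.Ioc (0:ℝ) t,
              (ENNReal.ofReal |u (n+1) s| + ENNReal.ofReal |v (n+1) s|) := by
            refine lintegral_mono fun s => ?_
            refine le_trans (ENNReal.ofReal_le_ofReal ?_) ENNReal.ofReal_add_le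
            exact abs_sub _ _
        _ ≤ ∫⁻ s in Set.Icc (0:ℝ) T,
              (ENNReal.ofReal |u (n+1) s| + ENNReal.ofReal |v (n+1) s|) :=
            lintegral_mono_set hsub
        _ = aa (n+1) + bb (n+1) := lintegral_add_left' (hameas n) _
    rw [h1, h2]
    exact ENNReal.toReal_mono (hafin n) h3
  -- the quantitative estimate
  have hkey : ∀ N : ℕ, m ≤ N → |w m t| ≤ lam ^ (2*m) * (aa (N+1) + bb (N+1)).toReal := by
    intro N hmN
    have h := key_estimate hlam w hw hw0 hm hmN ⟨ht0, htT⟩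
    refine h.trans ?_
    have hpow : (0:ℝ) ≤ lam ^ (2*m) := by positivity
    exact mul_le_mul_of_nonneg_left (hbound N) hpow
  -- the tail tends to zero
  have htail : Tendsto (fun N : ℕ => lam ^ (2*m) * (aa (N+1) + bb (N+1)).toReal)
      atTop (nhds 0) := by
    have ha0 : Tendsto (fun N : ℕ => aa (N+1)) atTop (nhds 0) :=
      ENNReal.tendsto_atTop_zero_of_tsum_ne_top hatsum
    have hb0 : Tendsto (fun N : ℕ => bb (N+1)) atTop (nhds 0) :=
      ENNReal.tendsto_atTop_zero_of_tsum_ne_top hbtsum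
    have hsum0 : Tendsto (fun N : ℕ => aa (N+1) + bb (N+1)) atTop (nhds 0) := by
      have := ha0.add hb0
      simpa using this
    have htoReal : Tendsto (fun N : ℕ => (aa (N+1) + bb (N+1)).toReal) atTop (nhds 0) := by
      have := (ENNReal.tendsto_toReal (by simp : (0:ENNReal) ≠ ⊤)).comp hsum0
      simpa [Function.comp_def] using this
    have := htoReal.const_mul (lam ^ (2*m))
    simpa using this
  -- conclude
  have habs : |w m t| ≤ 0 := by
    refine ge_of_tendsto htail ?_
    filter_upwards [eventually_ge_atTop m] with N hN
    exact hkey N hN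
  have : w m t = 0 := abs_eq_zero.1 (le_antisymm habs (abs_nonneg _))
  have : u m t - v m t = 0 := this
  linarith
end

section
/- Let λ > 1, k_n = λ^n, and ρ > 0. Suppose r = (r_i)_{i≥1} is a real sequence with Σ_{i≥1} |r_i| < ∞ satisfying ρ r₁ = k₁²(r₂ − r₁) and ρ r_i = k_i²(r_{i+1} − r_i) − k_{i−1}²(r_i − r_{i−1}) for all i ≥ 2. Then r_i = 0 for all i ≥ 1. -/
/-!
Write `d_n = w_n (r_{n+1} - r_n)` for the probability flux between states `n` and `n + 1`.
Summing the resolvent equations telescopes them to `d_n = ρ (r_1 + ⋯ + r_n)`. If `r_m` is the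
first nonzero entry, say `r_m > 0`, then every partial sum from `m` on is positive, so the
nonnegative rates force `r` to increase from `m` on; hence `r_n ≥ r_m > 0` for all `n ≥ m`,
which is impossible for a sequence tending to `0`, let alone a summable one.
-/

open Finset Filter Topology

namespace ResolventEquation

variable {w r : ℕ → ℝ} {ρ : ℝ}

theorem flux_eq_mul_sum (h1 : ρ * r 1 = w 1 * (r 2 - r 1))
    (hrec : ∀ n, ρ * r (n + 2) =
      w (n + 2) * (r (n + 3) - r (n + 2)) - w (n + 1) * (r (n + 2) - r (n + 1)))
    (n : ℕ) : w (n + 1) * (r (n + 2) - r (n + 1)) = ρ * ∑ j ∈ range (n + 1), r (j + 1) := by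
  induction n with
  | zero => simpa using h1.symm
  | succ n ih =>
    rw [sum_range_succ, mul_add, ← ih]
    linarith [hrec n]

theorem le_of_flux_eq_mul_sum (hw : ∀ n, 0 ≤ w n) (hρ : 0 < ρ)
    (hflux : ∀ n, w (n + 1) * (r (n + 2) - r (n + 1)) = ρ * ∑ j ∈ range (n + 1), r (j + 1))
    {m : ℕ} (hbefore : ∀ j < m, 0 ≤ r (j + 1)) (hm : 0 < r (m + 1)) :
    ∀ n, m ≤ n → r (m + 1) ≤ r (n + 1) := by
  suffices h : ∀ n, m ≤ n → ∀ j, m ≤ j → j ≤ n → r (m + 1) ≤ r (j + 1) from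
    fun n hn => h n hn n hn le_rfl
  intro n hn
  induction n, hn using Nat.le_induction with
  | base => intro j hj hj'; rw [le_antisymm hj' hj]
  | succ n hmn ih =>
    intro j hj hjn
    rcases Nat.lt_or_eq_of_le hjn with hjn | rfl
    · exact ih j hj (Nat.lt_succ_iff.mp hjn)
    have hsum : 0 < ∑ j ∈ range (n + 1), r (j + 1) := by
      refine hm.trans_le (single_le_sum (f := fun j => r (j + 1)) (fun j hj => ?_)
        (mem_range.mpr (Nat.lt_succ_of_le hmn)))
      rcases lt_or_ge j m with hjm | hjm
      · exact hbefore j hjm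
      · exact hm.le.trans (ih j hjm (Nat.lt_succ_iff.mp (mem_range.mp hj)))
    have hincr : r (n + 1) < r (n + 2) :=
      sub_pos.mp (pos_of_mul_pos_right ((hflux n).symm ▸ mul_pos hρ hsum) (hw _))
    exact (ih n hmn le_rfl).trans hincr.le

theorem not_pos_of_forall_lt_eq_zero (hw : ∀ n, 0 ≤ w n) (hρ : 0 < ρ)
    (hflux : ∀ n, w (n + 1) * (r (n + 2) - r (n + 1)) = ρ * ∑ j ∈ range (n + 1), r (j + 1))
    (hlim : Tendsto (fun n => r (n + 1)) atTop (𝓝 0))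
    {m : ℕ} (hbefore : ∀ j < m, r (j + 1) = 0) : ¬ 0 < r (m + 1) := fun hm =>
  hm.not_ge <| ge_of_tendsto hlim <| eventually_atTop.mpr
    ⟨m, le_of_flux_eq_mul_sum hw hρ hflux (fun j hj => (hbefore j hj).ge) hm⟩

theorem eq_zero_of_flux_eq_mul_sum (hw : ∀ n, 0 ≤ w n) (hρ : 0 < ρ)
    (hflux : ∀ n, w (n + 1) * (r (n + 2) - r (n + 1)) = ρ * ∑ j ∈ range (n + 1), r (j + 1))
    (hlim : Tendsto (fun n => r (n + 1)) atTop (𝓝 0)) (n : ℕ) : r (n + 1) = 0 := by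
  by_contra! hn
  have hex : ∃ m, r (m + 1) ≠ 0 := ⟨n, hn⟩
  have hbefore (j : ℕ) (hj : j < Nat.find hex) : r (j + 1) = 0 := by
    simpa using Nat.find_min hex hj
  have hflux_neg (n : ℕ) : w (n + 1) * (-r (n + 2) - -r (n + 1)) =
      ρ * ∑ j ∈ range (n + 1), -r (j + 1) := by
    rw [sum_neg_distrib]; linarith [hflux n]
  rcases (Nat.find_spec hex).lt_or_gt with hneg | hpos
  · exact not_pos_of_forall_lt_eq_zero (r := fun n => -r n) hw hρ hflux_neg
      (by simpa using hlim.neg) (fun j hj => neg_eq_zero.mpr (hbefore j hj)) (neg_pos.mpr hneg)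
  · exact not_pos_of_forall_lt_eq_zero hw hρ hflux hlim hbefore hpos

end ResolventEquation

theorem stmt_2_general (lam ρ : ℝ) (hρ : 0 < ρ) (r : ℕ → ℝ)
    (hsum : Summable fun i : ℕ => |r (i + 1)|)
    (h1 : ρ * r 1 = lam ^ 2 * (r 2 - r 1))
    (hrec : ∀ i : ℕ, 2 ≤ i →
      ρ * r i = lam ^ (2 * i) * (r (i + 1) - r i)
        - lam ^ (2 * (i - 1)) * (r i - r (i - 1))) :
    ∀ i : ℕ, 1 ≤ i → r i = 0 := by
  have hflux := ResolventEquation.flux_eq_mul_sum (w := fun i => lam ^ (2 * i)) (r := r)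
    (by simpa using h1) fun n => by simpa using hrec (n + 2) (by omega)
  have hlim : Tendsto (fun n => r (n + 1)) atTop (𝓝 0) :=
    tendsto_zero_iff_abs_tendsto_zero _ |>.mpr hsum.tendsto_atTop_zero
  intro i hi
  obtain ⟨n, rfl⟩ := Nat.exists_eq_add_of_le' hi
  exact ResolventEquation.eq_zero_of_flux_eq_mul_sum (w := fun i => lam ^ (2 * i))
    (fun i => (even_two_mul i).pow_nonneg lam) hρ hflux hlim n

theorem stmt_2 (lam ρ : ℝ) (hlam : 1 < lam) (hρ : 0 < ρ) (r : ℕ → ℝ)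
    (hsum : Summable fun i : ℕ => |r (i + 1)|)
    (h1 : ρ * r 1 = lam ^ 2 * (r 2 - r 1))
    (hrec : ∀ i : ℕ, 2 ≤ i →
      ρ * r i = lam ^ (2 * i) * (r (i + 1) - r i)
        - lam ^ (2 * (i - 1)) * (r i - r (i - 1))) :
    ∀ i : ℕ, 1 ≤ i → r i = 0 :=
  stmt_2_general lam ρ hρ r hsum h1 hrec
end

section
/- Let λ > 1, k_n = λ^n, and ρ > 0. Suppose r = (r_i)_{i≥1} is a real sequence satisfying ρ r₁ = k₁²(r₂ − r₁) and ρ r_i = k_i²(r_{i+1} − r_i) − k_{i−1}²(r_i − r_{i−1}) for all i ≥ 2, and that r₁ ≠ 0. Then the sequence (r_i / r₁)_{i≥1} is strictly increasing, and in particular r_i / r₁ > 1 for all i ≥ 2. -/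
/- STATEMENT 3.
If `r` satisfies the resolvent equations `ρ r₁ = k₁²(r₂ − r₁)` and
`ρ r_i = k_i²(r_{i+1} − r_i) − k_{i−1}²(r_i − r_{i−1})` for `i ≥ 2`, with `k_n = lam^n`,
`lam > 1`, `ρ > 0`, and `r₁ ≠ 0`, then `(r_i / r₁)_{i≥1}` is strictly increasing and in
particular `r_i / r₁ > 1` for all `i ≥ 2`. -/
theorem stmt_3 (lam ρ : ℝ) (hlam : 1 < lam) (hρ : 0 < ρ) (r : ℕ → ℝ)
    (h1 : ρ * r 1 = lam ^ 2 * (r 2 - r 1))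
    (hrec : ∀ i : ℕ, 2 ≤ i →
      ρ * r i = lam ^ (2 * i) * (r (i + 1) - r i)
        - lam ^ (2 * (i - 1)) * (r i - r (i - 1)))
    (hr1 : r 1 ≠ 0) :
    (∀ i : ℕ, 1 ≤ i → r i / r 1 < r (i + 1) / r 1)
    ∧ (∀ i : ℕ, 2 ≤ i → 1 < r i / r 1) := by
  set t : ℕ → ℝ := fun i => r i / r 1 with ht
  have hlam0 : (0:ℝ) < lam := lt_trans one_pos hlam
  have ht1 : t 1 = 1 := div_self hr1
  have h1' : ρ * t 1 = lam ^ 2 * (t 2 - t 1) := by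
    simp only [ht]
    linear_combination h1 / r 1
  have hrec' : ∀ i : ℕ, 2 ≤ i →
      ρ * t i = lam ^ (2 * i) * (t (i + 1) - t i)
        - lam ^ (2 * (i - 1)) * (t i - t (i - 1)) := by
    intro i hi
    simp only [ht]
    linear_combination (hrec i hi) / r 1
  have key : ∀ i : ℕ, 1 ≤ i → 0 < t i ∧ t i < t (i + 1) := by
    intro i hi
    induction i with
    | zero => omega
    | succ n ih =>
      rcases Nat.lt_or_ge n 1 with h | h
      · -- n = 0, i = 1
        interval_cases n
        refine ⟨by rw [ht1]; norm_num, ?_⟩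
        have hpow : (0:ℝ) < lam ^ 2 := pow_pos hlam0 2
        nlinarith [h1', ht1]
      · obtain ⟨hp, hlt⟩ := ih h
        have hpos : 0 < t (n + 1) := lt_trans hp hlt
        refine ⟨hpos, ?_⟩
        have hr := hrec' (n + 1) (by omega)
        have hs : n + 1 - 1 = n := by omega
        rw [hs] at hr
        have hpow1 : (0:ℝ) < lam ^ (2 * (n + 1)) := pow_pos hlam0 _
        have hpow2 : (0:ℝ) < lam ^ (2 * n) := pow_pos hlam0 _
        nlinarith [hr]
  constructor
  · intro i hi
    exact (key i hi).2
  · intro i hi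
    induction i with
    | zero => omega
    | succ n ih =>
      rcases Nat.lt_or_ge n 2 with h | h
      · have hn : n = 1 := by omega
        subst hn
        have h2 := (key 1 le_rfl).2
        rw [ht1] at h2
        exact h2
      · exact lt_trans (ih h) (key n (by omega)).2
end

section
/- Let λ > 1, k_n = λ^n, and T > 0. Suppose u_n : [0,T] → [0,∞), n ≥ 1, are differentiable, satisfy the system u₁' = −k₁²u₁ + k₁²u₂ and u_n' = k_{n−1}²u_{n−1} − (k_{n−1}² + k_n²)u_n + k_n²u_{n+1} for n ≥ 2 pointwise on [0,T], and satisfy ∫₀ᵀ Σ_{n≥1} u_n(t) dt < ∞. Then for every t ∈ [0,T], Σ_{n≥1} λ^{−2n} u_n(t) ≤ Σ_{n≥1} λ^{−2n} u_n(0) (as an inequality in [0,∞]). -/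
/-!
Shift indices so that `u m` is the paper's `u_{m+1}`; the system becomes `u' = Δ_c u` for the
chain Laplacian with conductances `c m = k_{m+1}² = λ^{2(m+1)}`, and the weights are `1 / c m`.
Summation by parts gives, for the partial sum `S_N = ∑_{m<N} u_m / c_m`,
`S_N' = u_N - r u_{N-1} - (1 - r) u_0 ≤ u_N` whenever `c m = r c (m+1)` with `0 ≤ r ≤ 1`
(here `r = λ⁻²`). Hence `S_N(t) ≤ S_N(0) + ∫₀ᵀ u_N`, and the error term tends to `0` because
`∑_N ∫₀ᵀ u_N < ∞`.
-/

open MeasureTheory Set Finset Filter Topology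

theorem ENNReal.tsum_le_tsum_of_sum_range_le_add {f g ε : ℕ → ENNReal}
    (hε : Tendsto ε atTop (𝓝 0)) (h : ∀ N, ∑ m ∈ range N, f m ≤ ∑ m ∈ range N, g m + ε N) :
    ∑' m, f m ≤ ∑' m, g m := by
  rw [ENNReal.tsum_eq_iSup_nat]
  refine iSup_le fun M => ge_of_tendsto (by simpa using hε.const_add (∑' m, g m)) ?_
  filter_upwards [eventually_ge_atTop M] with N hN
  calc ∑ m ∈ range M, f m ≤ ∑ m ∈ range N, f m := sum_le_sum_of_subset (range_subset_range.2 hN)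
    _ ≤ ∑ m ∈ range N, g m + ε N := h N
    _ ≤ ∑' m, g m + ε N := by gcongr; exact ENNReal.sum_le_tsum _

def chainLaplacian (c a : ℕ → ℝ) : ℕ → ℝ
  | 0 => c 0 * (a 1 - a 0)
  | m + 1 => c (m + 1) * (a (m + 2) - a (m + 1)) - c m * (a (m + 1) - a m)

section ChainLaplacian

variable {c a : ℕ → ℝ} {r : ℝ}

theorem sum_inv_mul_chainLaplacian (hc : ∀ m, c m ≠ 0) (hcr : ∀ m, c m = r * c (m + 1))
    (N : ℕ) :
    ∑ m ∈ range (N + 1), (c m)⁻¹ * chainLaplacian c a m = a (N + 1) - r * a N - (1 - r) * a 0 := by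
  induction N with
  | zero => simp [chainLaplacian, hc 0]; ring
  | succ N ih =>
    rw [sum_range_succ, ih, chainLaplacian, hcr N]
    field_simp [hc (N + 1)]
    ring

theorem sum_inv_mul_chainLaplacian_le (hc : ∀ m, c m ≠ 0) (hcr : ∀ m, c m = r * c (m + 1))
    (hr₀ : 0 ≤ r) (hr₁ : r ≤ 1) (ha : ∀ m, 0 ≤ a m) (N : ℕ) :
    ∑ m ∈ range N, (c m)⁻¹ * chainLaplacian c a m ≤ a N := by
  cases N with
  | zero => simpa using ha 0
  | succ N =>
    rw [sum_inv_mul_chainLaplacian hc hcr]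
    have := mul_nonneg hr₀ (ha N)
    have := mul_nonneg (sub_nonneg.2 hr₁) (ha 0)
    linarith

end ChainLaplacian

section HeatChain

variable {c : ℕ → ℝ} {r : ℝ} {u : ℕ → ℝ → ℝ} {T : ℝ}

theorem sum_inv_mul_sub_le_integral (hc : ∀ m, c m ≠ 0) (hcr : ∀ m, c m = r * c (m + 1))
    (hr₀ : 0 ≤ r) (hr₁ : r ≤ 1) (hT : 0 ≤ T)
    (hderiv : ∀ n, ∀ t ∈ Icc 0 T, HasDerivAt (u n) (chainLaplacian c (u · t) n) t)
    (hnonneg : ∀ n, ∀ t ∈ Icc 0 T, 0 ≤ u n t) (N : ℕ) :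
    ∑ m ∈ range N, (c m)⁻¹ * u m T - ∑ m ∈ range N, (c m)⁻¹ * u m 0 ≤ ∫ t in 0..T, u N t := by
  have hcont : ∀ n, ContinuousOn (u n) (Icc 0 T) := fun n t ht =>
    (hderiv n t ht).continuousAt.continuousWithinAt
  refine intervalIntegral.sub_le_integral_of_hasDeriv_right_of_le
    (g := fun t => ∑ m ∈ range N, (c m)⁻¹ * u m t)
    (g' := fun t => ∑ m ∈ range N, (c m)⁻¹ * chainLaplacian c (u · t) m) hT
    (continuousOn_finsetSum _ fun m _ => continuousOn_const.mul (hcont m))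
    (fun t ht => ?_) (hcont N).integrableOn_Icc (fun t ht => ?_)
  · exact (HasDerivAt.fun_sum fun m _ =>
      (hderiv m t (Ioo_subset_Icc_self ht)).const_mul (c m)⁻¹).hasDerivWithinAt
  · exact sum_inv_mul_chainLaplacian_le hc hcr hr₀ hr₁
      (fun m => hnonneg m t (Ioo_subset_Icc_self ht)) N

theorem tsum_ofReal_inv_mul_le (hc : ∀ m, 0 < c m) (hcr : ∀ m, c m = r * c (m + 1))
    (hr₀ : 0 ≤ r) (hr₁ : r ≤ 1)
    (hderiv : ∀ n, ∀ t ∈ Icc 0 T, HasDerivAt (u n) (chainLaplacian c (u · t) n) t)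
    (hnonneg : ∀ n, ∀ t ∈ Icc 0 T, 0 ≤ u n t)
    (hint : ∫⁻ t in Icc 0 T, ∑' n, ENNReal.ofReal (u n t) ≠ ⊤) {t : ℝ} (ht : t ∈ Icc 0 T) :
    ∑' n, ENNReal.ofReal ((c n)⁻¹ * u n t) ≤ ∑' n, ENNReal.ofReal ((c n)⁻¹ * u n 0) := by
  have hcont : ∀ n, ContinuousOn (u n) (Icc 0 T) := fun n t ht =>
    (hderiv n t ht).continuousAt.continuousWithinAt
  set ε : ℕ → ENNReal := fun N => ∫⁻ s in Icc 0 T, ENNReal.ofReal (u N s)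
  have hε : Tendsto ε atTop (𝓝 0) := by
    refine ENNReal.tendsto_atTop_zero_of_tsum_ne_top ?_
    rwa [← lintegral_tsum fun n => ((hcont n).aemeasurable measurableSet_Icc).ennreal_ofReal]
  refine ENNReal.tsum_le_tsum_of_sum_range_le_add hε fun N => ?_
  have hmass : ENNReal.ofReal (∫ s in 0..t, u N s) ≤ ε N := by
    rw [intervalIntegral.integral_of_le ht.1, ofReal_integral_eq_lintegral_ofReal]
    · exact lintegral_mono_set (Ioc_subset_Icc_self.trans (Icc_subset_Icc_right ht.2))
    · exact ((hcont N).mono (Icc_subset_Icc_right ht.2)).integrableOn_Icc.mono_set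
        Ioc_subset_Icc_self
    · filter_upwards [ae_restrict_mem measurableSet_Ioc] with s hs
      exact hnonneg N s ⟨hs.1.le, hs.2.trans ht.2⟩
  have hsum := sum_inv_mul_sub_le_integral (fun m => (hc m).ne') hcr hr₀ hr₁ ht.1
    (fun n s hs => hderiv n s (Icc_subset_Icc_right ht.2 hs))
    (fun n s hs => hnonneg n s (Icc_subset_Icc_right ht.2 hs)) N
  have hw : ∀ m, ∀ s ∈ Icc 0 T, 0 ≤ (c m)⁻¹ * u m s := fun m s hs =>
    mul_nonneg (inv_nonneg.2 (hc m).le) (hnonneg m s hs)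
  calc ∑ m ∈ range N, ENNReal.ofReal ((c m)⁻¹ * u m t)
      = ENNReal.ofReal (∑ m ∈ range N, (c m)⁻¹ * u m t) :=
        (ENNReal.ofReal_sum_of_nonneg fun m _ => hw m t ht).symm
    _ ≤ ENNReal.ofReal (∑ m ∈ range N, (c m)⁻¹ * u m 0) + ENNReal.ofReal (∫ s in 0..t, u N s) :=
        (ENNReal.ofReal_le_ofReal (by linarith)).trans ENNReal.ofReal_add_le
    _ ≤ ∑ m ∈ range N, ENNReal.ofReal ((c m)⁻¹ * u m 0) + ε N := by
        rw [ENNReal.ofReal_sum_of_nonneg fun m _ => hw m 0 ⟨le_rfl, ht.1.trans ht.2⟩]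
        gcongr

end HeatChain
theorem stmt_4_general (lam T : ℝ) (hlam : 1 < lam) (u : ℕ → ℝ → ℝ)
    (hnonneg : ∀ n : ℕ, 1 ≤ n → ∀ t ∈ Set.Icc (0 : ℝ) T, 0 ≤ u n t)
    (hu1 : ∀ t ∈ Set.Icc (0 : ℝ) T,
      HasDerivAt (u 1) (-(lam ^ 2) * u 1 t + lam ^ 2 * u 2 t) t)
    (hun : ∀ n : ℕ, ∀ t ∈ Set.Icc (0 : ℝ) T,
      HasDerivAt (u (n + 2))
        (lam ^ (2 * (n + 1)) * u (n + 1) t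
          - (lam ^ (2 * (n + 1)) + lam ^ (2 * (n + 2))) * u (n + 2) t
          + lam ^ (2 * (n + 2)) * u (n + 3) t) t)
    (hint : ∫⁻ t in Set.Icc (0 : ℝ) T, ∑' n : ℕ, ENNReal.ofReal (u (n + 1) t) < ⊤) :
    ∀ t ∈ Set.Icc (0 : ℝ) T,
      ∑' n : ℕ, ENNReal.ofReal (lam ^ (-(2 * ((n : ℤ) + 1))) * u (n + 1) t)
        ≤ ∑' n : ℕ, ENNReal.ofReal (lam ^ (-(2 * ((n : ℤ) + 1))) * u (n + 1) 0) := by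
  intro t ht
  set c : ℕ → ℝ := fun m => lam ^ (2 * (m + 1))
  have hc : ∀ m, 0 < c m := fun m => pow_pos (zero_lt_one.trans hlam) _
  have hcr : ∀ m, c m = (lam ^ 2)⁻¹ * c (m + 1) := fun m => by
    field_simp [(hc 0).ne']
    ring
  have hderiv : ∀ n, ∀ t ∈ Icc 0 T,
      HasDerivAt (u (n + 1)) (chainLaplacian c (fun m => u (m + 1) t) n) t := by
    rintro (_ | n) t ht
    · convert hu1 t ht using 1
      simp only [chainLaplacian, c]
      ring
    · convert hun n t ht using 1
      simp only [chainLaplacian, c]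
      ring
  have hweight : ∀ n : ℕ, lam ^ (-(2 * ((n : ℤ) + 1))) = (c n)⁻¹ := fun n => by
    rw [zpow_neg]
    norm_cast
  simp only [hweight]
  exact tsum_ofReal_inv_mul_le hc hcr (by positivity)
    (inv_le_one_of_one_le₀ (one_le_pow₀ hlam.le)) hderiv
    (fun n => hnonneg (n + 1) n.succ_pos) hint.ne ht

theorem stmt_4 (lam T : ℝ) (hlam : 1 < lam) (hT : 0 < T) (u : ℕ → ℝ → ℝ)
    (hnonneg : ∀ n : ℕ, 1 ≤ n → ∀ t ∈ Set.Icc (0 : ℝ) T, 0 ≤ u n t)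
    (hu1 : ∀ t ∈ Set.Icc (0 : ℝ) T,
      HasDerivAt (u 1) (-(lam ^ 2) * u 1 t + lam ^ 2 * u 2 t) t)
    (hun : ∀ n : ℕ, ∀ t ∈ Set.Icc (0 : ℝ) T,
      HasDerivAt (u (n + 2))
        (lam ^ (2 * (n + 1)) * u (n + 1) t
          - (lam ^ (2 * (n + 1)) + lam ^ (2 * (n + 2))) * u (n + 2) t
          + lam ^ (2 * (n + 2)) * u (n + 3) t) t)
    (hint : ∫⁻ t in Set.Icc (0 : ℝ) T, ∑' n : ℕ, ENNReal.ofReal (u (n + 1) t) < ⊤) :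
    ∀ t ∈ Set.Icc (0 : ℝ) T,
      ∑' n : ℕ, ENNReal.ofReal (lam ^ (-(2 * ((n : ℤ) + 1))) * u (n + 1) t)
        ≤ ∑' n : ℕ, ENNReal.ofReal (lam ^ (-(2 * ((n : ℤ) + 1))) * u (n + 1) 0) :=
  stmt_4_general lam T hlam u hnonneg hu1 hun hint
end

section
/- Let λ > 1 and let (T_n)_{n≥1} be independent random variables on a probability space, where T_n is exponentially distributed with rate (1 − λ^{−2}) λ^{2n} (equivalently, mean λ^{−2n}/(1 − λ^{−2})). Then for every t > 0, P(Σ_{n≥1} T_n > t) ≤ ( exp( (λ² − 1)³ λ^{−4} t ) − 1 )^{−1}. In particular, for every t > log 2 · λ⁴ (λ² − 1)^{−3} one has P(Σ_{n≥1} T_n > t) < 1. -/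
/-!
Split the level `t` as `t = ∑ θₙ t` with `θₙ = (1 - x)² (n + 1) xⁿ`, where `x = λ⁻²` (so
`∑ θₙ = 1`). If `∑ Tₙ > t`, then `Tₙ > θₙ t` for some `n`, so the union bound and the
exponential tails give `P(∑ Tₙ > t) ≤ ∑ exp(-(n + 1) c t) = (exp(c t) - 1)⁻¹` with
`c = (1 - x)³ / x = (λ² - 1)³ λ⁻⁴`: the weights are chosen so that the `n`-th rate times `θₙ`
is `(n + 1) c`.
-/

open MeasureTheory ProbabilityTheory

theorem hasSum_add_one_mul_geometric {x : ℝ} (hx : ‖x‖ < 1) :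
    HasSum (fun n : ℕ => ((n : ℝ) + 1) * x ^ n) ((1 - x) ^ 2)⁻¹ := by
  simpa using hasSum_choose_mul_geometric_of_norm_lt_one 1 hx

theorem hasSum_exp_neg_pow_succ {c : ℝ} (hc : 0 < c) :
    HasSum (fun n : ℕ => Real.exp (-c) ^ (n + 1)) (Real.exp c - 1)⁻¹ := by
  have hq1 : Real.exp (-c) < 1 := Real.exp_lt_one_iff.mpr (neg_lt_zero.mpr hc)
  have hE : 1 < Real.exp c := Real.one_lt_exp_iff.mpr hc
  have h := (hasSum_geometric_of_lt_one (Real.exp_pos _).le hq1).mul_right (Real.exp (-c))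
  simp only [← pow_succ] at h
  have hsum : (1 - Real.exp (-c))⁻¹ * Real.exp (-c) = (Real.exp c - 1)⁻¹ := by
    rw [Real.exp_neg]
    field_simp [(sub_pos.mpr hE).ne']
  rwa [hsum] at h

theorem inv_exp_sub_one_lt_one {y : ℝ} (hy : Real.log 2 < y) : (Real.exp y - 1)⁻¹ < 1 := by
  have h2 : 2 < Real.exp y := by
    simpa [Real.exp_log two_pos] using Real.exp_lt_exp.mpr hy
  exact inv_lt_one_of_one_lt₀ (by linarith)

section UnionBound

variable {Ω : Type*} [MeasurableSpace Ω] (μ : Measure Ω)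

theorem measure_lt_tsum_le_tsum_measure_lt (X : ℕ → Ω → ℝ) {w : ℕ → ℝ} {t : ℝ}
    (hw0 : ∀ n, 0 ≤ w n) (hw : HasSum w t) :
    μ {ω | ENNReal.ofReal t < ∑' n, ENNReal.ofReal (X n ω)}
      ≤ ∑' n, μ {ω | w n < X n ω} := by
  have hsub : {ω | ENNReal.ofReal t < ∑' n, ENNReal.ofReal (X n ω)}
      ⊆ ⋃ n, {ω | w n < X n ω} := by
    intro ω hω
    by_contra hnot
    simp only [Set.mem_iUnion, Set.mem_ofPred_eq, not_exists, not_lt] at hnot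
    have hle : ∑' n, ENNReal.ofReal (X n ω) ≤ ENNReal.ofReal t := by
      rw [← hw.tsum_eq, ENNReal.ofReal_tsum_of_nonneg hw0 hw.summable]
      exact ENNReal.tsum_le_tsum fun n => ENNReal.ofReal_le_ofReal (hnot n)
    exact (not_lt.mpr hle) hω
  exact (measure_mono hsub).trans (measure_iUnion_le _)

theorem measure_lt_tsum_le_inv_exp_sub_one {x : ℝ} (hx0 : 0 < x) (hx1 : x < 1)
    (T : ℕ → Ω → ℝ)
    (htail : ∀ n : ℕ, ∀ s : ℝ, 0 ≤ s →
      μ {ω | s < T n ω} ≤ ENNReal.ofReal (Real.exp (-((1 - x) / x ^ (n + 1) * s))))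
    {t : ℝ} (ht : 0 < t) :
    μ {ω | ENNReal.ofReal t < ∑' n, ENNReal.ofReal (T n ω)}
      ≤ ENNReal.ofReal ((Real.exp ((1 - x) ^ 3 / x * t) - 1)⁻¹) := by
  have h1x : 0 < 1 - x := sub_pos.mpr hx1
  set c := (1 - x) ^ 3 / x
  set w : ℕ → ℝ := fun n => (1 - x) ^ 2 * (((n : ℝ) + 1) * x ^ n) * t
  have hw0 : ∀ n, 0 ≤ w n := fun n => by positivity
  have hw : HasSum w t := by
    have h := ((hasSum_add_one_mul_geometric
      (by rwa [Real.norm_of_nonneg hx0.le])).mul_left ((1 - x) ^ 2)).mul_right t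
    rwa [mul_inv_cancel₀ (pow_ne_zero 2 h1x.ne'), one_mul] at h
  have hrate : ∀ n : ℕ, (1 - x) / x ^ (n + 1) * w n = (n + 1 : ℕ) * (c * t) := by
    intro n
    simp only [w, c]
    field_simp
    push_cast
    ring
  have hgeom := hasSum_exp_neg_pow_succ (c := c * t) (by positivity)
  calc μ {ω | ENNReal.ofReal t < ∑' n, ENNReal.ofReal (T n ω)}
      ≤ ∑' n, μ {ω | w n < T n ω} := measure_lt_tsum_le_tsum_measure_lt μ T hw0 hw
    _ ≤ ∑' n : ℕ, ENNReal.ofReal (Real.exp (-(c * t)) ^ (n + 1)) := by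
        refine ENNReal.tsum_le_tsum fun n => (htail n (w n) (hw0 n)).trans_eq ?_
        rw [hrate, ← Real.exp_nat_mul, mul_neg]
    _ = ENNReal.ofReal ((Real.exp (c * t) - 1)⁻¹) := by
        rw [← ENNReal.ofReal_tsum_of_nonneg (fun n => by positivity) hgeom.summable,
          hgeom.tsum_eq]

end UnionBound

theorem stmt_8_general {Ω : Type*} [MeasurableSpace Ω] (P : Measure Ω)
    (lam : ℝ) (hlam : 1 < lam) (T : ℕ → Ω → ℝ)
    (hdist : ∀ n : ℕ, ∀ s : ℝ, 0 ≤ s →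
      P {ω | s < T n ω}
        = ENNReal.ofReal
            (Real.exp (-((1 - lam ^ (-2 : ℤ)) * lam ^ (2 * (n + 1)) * s)))) :
    ∀ t : ℝ, 0 < t →
      (P {ω | ENNReal.ofReal t < ∑' n : ℕ, ENNReal.ofReal (T n ω)}
        ≤ ENNReal.ofReal ((Real.exp ((lam ^ 2 - 1) ^ 3 / lam ^ 4 * t) - 1)⁻¹))
      ∧ (Real.log 2 * lam ^ 4 / (lam ^ 2 - 1) ^ 3 < t →
          P {ω | ENNReal.ofReal t < ∑' n : ℕ, ENNReal.ofReal (T n ω)} < 1) := by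
  intro t ht
  have hlam2 : 1 < lam ^ 2 := one_lt_pow₀ hlam two_ne_zero
  have hx0 : 0 < (lam ^ 2)⁻¹ := by positivity
  have hx1 : (lam ^ 2)⁻¹ < 1 := inv_lt_one_of_one_lt₀ hlam2
  have hc : (lam ^ 2 - 1) ^ 3 / lam ^ 4 = (1 - (lam ^ 2)⁻¹) ^ 3 / (lam ^ 2)⁻¹ := by
    field_simp
  have htail : ∀ n : ℕ, ∀ s : ℝ, 0 ≤ s → P {ω | s < T n ω}
      ≤ ENNReal.ofReal (Real.exp (-((1 - (lam ^ 2)⁻¹) / (lam ^ 2)⁻¹ ^ (n + 1) * s))) := by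
    intro n s hs
    rw [hdist n s hs, zpow_neg, inv_pow, div_inv_eq_mul, ← pow_mul]
    norm_cast
  have hbound := hc ▸ measure_lt_tsum_le_inv_exp_sub_one P hx0 hx1 T htail ht
  refine ⟨hbound, fun hlog => hbound.trans_lt (ENNReal.ofReal_lt_one.mpr
    (inv_exp_sub_one_lt_one ?_))⟩
  have hd : 0 < (lam ^ 2 - 1) ^ 3 := pow_pos (sub_pos.mpr hlam2) 3
  rw [div_lt_iff₀ hd] at hlog
  rw [div_mul_eq_mul_div, lt_div_iff₀ (by positivity)]
  linarith

theorem stmt_8 {Ω : Type*} [MeasurableSpace Ω] (P : Measure Ω) [IsProbabilityMeasure P]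
    (lam : ℝ) (hlam : 1 < lam) (T : ℕ → Ω → ℝ)
    (hmeas : ∀ n : ℕ, Measurable (T n))
    (hindep : iIndepFun T P)
    (hdist : ∀ n : ℕ, ∀ s : ℝ, 0 ≤ s →
      P {ω | s < T n ω}
        = ENNReal.ofReal
            (Real.exp (-((1 - lam ^ (-2 : ℤ)) * lam ^ (2 * (n + 1)) * s)))) :
    ∀ t : ℝ, 0 < t →
      (P {ω | ENNReal.ofReal t < ∑' n : ℕ, ENNReal.ofReal (T n ω)}
        ≤ ENNReal.ofReal ((Real.exp ((lam ^ 2 - 1) ^ 3 / lam ^ 4 * t) - 1)⁻¹))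
      ∧ (Real.log 2 * lam ^ 4 / (lam ^ 2 - 1) ^ 3 < t →
          P {ω | ENNReal.ofReal t < ∑' n : ℕ, ENNReal.ofReal (T n ω)} < 1) :=
  stmt_8_general P lam hlam T hdist
end

section
/- Let f_{i,j} : [0,∞) → [0,∞), i, j ≥ 1, be nonnegative functions satisfying the Chapman–Kolmogorov property f_{i,j}(s+t) = Σ_{k≥1} f_{i,k}(s) f_{k,j}(t) for all s, t ≥ 0 and i, j ≥ 1, the sub-stochasticity property Σ_{j≥1} f_{i,j}(t) ≤ 1 for all i ≥ 1 and t ≥ 0, and the positivity property f_{1,n}(u) > 0 for all n ≥ 1 and u > 0. If there exists t̃ > 0 with Σ_{j≥1} f_{1,j}(t̃) < 1, then Σ_{j≥1} f_{1,j}(t) < 1 for every t > 0. -/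
/-!
Write `m_i(t) = Σ_j p_{i,j}(t)` for the mass of row `i` at time `t`. By Chapman–Kolmogorov,
`m_i(s + u) = Σ_k p_{i,k}(s) m_k(u)`, and since every `m_k ≤ 1` each `m_i` is antitone.
If all rows had full mass at some time `u > 0`, the identity would propagate `m_1 = 1` to every
multiple of `u`, hence (by antitonicity) to `t̃`. So some row `k` loses mass at time `t / 2`, and
since `p_{1,k}(t / 2) > 0` row `1` loses mass at time `t = t / 2 + t / 2`.
-/

open scoped ENNReal

theorem ENNReal.tsum_mul_lt_one {ι : Type*} {a m : ι → ℝ≥0∞} (ha : ∑' k, a k ≤ 1)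
    (hm : ∀ k, m k ≤ 1) {k₀ : ι} (ha₀ : a k₀ ≠ 0) (hm₀ : m k₀ < 1) :
    ∑' k, a k * m k < 1 := by
  have hle : ∀ k, a k * m k ≤ a k := fun k => mul_le_of_le_one_right' (hm k)
  have ha_ne_top : ∑' k, a k ≠ ∞ := ne_top_of_le_ne_top one_ne_top ha
  have hlt : a k₀ * m k₀ < a k₀ := by
    simpa using ENNReal.mul_lt_mul_right ha₀ (ne_top_of_le_ne_top ha_ne_top (ENNReal.le_tsum k₀))
      hm₀
  calc ∑' k, a k * m k
      < ∑' k, a k :=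
        ENNReal.tsum_lt_tsum (ne_top_of_le_ne_top ha_ne_top (ENNReal.tsum_le_tsum hle)) hle hlt
    _ ≤ 1 := ha

theorem summable_of_tsum_ofReal_ne_top {ι : Type*} {g : ι → ℝ} (hg : ∀ k, 0 ≤ g k)
    (h : ∑' k, ENNReal.ofReal (g k) ≠ ∞) : Summable g :=
  (ENNReal.summable_toReal h).congr fun k => ENNReal.toReal_ofReal (hg k)

section TransitionFunction

variable {ι : Type*}

def ChapmanKolmogorov (p : ι → ι → ℝ → ℝ≥0∞) : Prop :=
  ∀ i j s t, 0 ≤ s → 0 ≤ t → p i j (s + t) = ∑' k, p i k s * p k j t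

def SubStochastic (p : ι → ι → ℝ → ℝ≥0∞) : Prop :=
  ∀ i t, 0 ≤ t → ∑' j, p i j t ≤ 1

theorem SubStochastic.le_one {p : ι → ι → ℝ → ℝ≥0∞} (hsub : SubStochastic p) (i j : ι)
    {t : ℝ} (ht : 0 ≤ t) : p i j t ≤ 1 :=
  (ENNReal.le_tsum j).trans (hsub i t ht)

namespace ChapmanKolmogorov

variable {p : ι → ι → ℝ → ℝ≥0∞}

theorem tsum_add (hp : ChapmanKolmogorov p) {i : ι} {s t : ℝ} (hs : 0 ≤ s) (ht : 0 ≤ t) :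
    ∑' j, p i j (s + t) = ∑' k, p i k s * ∑' j, p k j t := by
  rw [tsum_congr fun j => hp i j s t hs ht, ENNReal.tsum_comm]
  simp_rw [ENNReal.tsum_mul_left]

theorem tsum_le_of_le (hp : ChapmanKolmogorov p) (hsub : SubStochastic p) {i : ι} {s t : ℝ}
    (hs : 0 ≤ s) (hst : s ≤ t) : ∑' j, p i j t ≤ ∑' j, p i j s := by
  obtain ⟨d, hd, rfl⟩ : ∃ d, 0 ≤ d ∧ t = s + d := ⟨t - s, by linarith, by ring⟩
  rw [hp.tsum_add hs hd]
  exact ENNReal.tsum_le_tsum fun k => mul_le_of_le_one_right' (hsub k d hd)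

theorem exists_tsum_lt_one (hp : ChapmanKolmogorov p) (hsub : SubStochastic p) {i : ι}
    {t₀ : ℝ} (ht₀ : 0 ≤ t₀) (hlt : ∑' j, p i j t₀ < 1) {u : ℝ} (hu : 0 < u) :
    ∃ k, ∑' j, p k j u < 1 := by
  by_contra! h
  have hfull : ∀ k, ∑' j, p k j u = 1 := fun k => (hsub k u hu.le).antisymm (h k)
  have hfull_mul : ∀ n : ℕ, ∑' j, p i j ((n + 1) * u) = 1 := by
    intro n
    induction n with
    | zero => simpa using hfull i
    | succ n ih =>
      rw [Nat.cast_succ, add_one_mul, hp.tsum_add (by positivity) hu.le]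
      simpa [hfull] using ih
  obtain ⟨n, hn⟩ := exists_nat_ge (t₀ / u)
  have hle : t₀ ≤ (n + 1) * u := by
    rw [div_le_iff₀ hu] at hn
    linarith
  have hmono : ∑' j, p i j ((n + 1) * u) ≤ ∑' j, p i j t₀ := hp.tsum_le_of_le hsub ht₀ hle
  rw [hfull_mul n] at hmono
  exact hlt.not_ge hmono

theorem tsum_lt_one (hp : ChapmanKolmogorov p) (hsub : SubStochastic p) {i : ι}
    (hpos : ∀ k u, 0 < u → p i k u ≠ 0) {t₀ : ℝ} (ht₀ : 0 ≤ t₀) (hlt : ∑' j, p i j t₀ < 1)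
    {t : ℝ} (ht : 0 < t) : ∑' j, p i j t < 1 := by
  have ht2 := half_pos ht
  obtain ⟨k, hk⟩ := hp.exists_tsum_lt_one hsub ht₀ hlt ht2
  rw [← add_halves t, hp.tsum_add ht2.le ht2.le]
  exact ENNReal.tsum_mul_lt_one (hsub i _ ht2.le) (fun k => hsub k _ ht2.le) (hpos k _ ht2) hk

end ChapmanKolmogorov

end TransitionFunction

theorem chapmanKolmogorov_ofReal (f : ℕ → ℕ → ℝ → ℝ)
    (hnonneg : ∀ i j : ℕ, 1 ≤ i → 1 ≤ j → ∀ t : ℝ, 0 ≤ t → 0 ≤ f i j t)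
    (hCK : ∀ i j : ℕ, 1 ≤ i → 1 ≤ j → ∀ s t : ℝ, 0 ≤ s → 0 ≤ t →
      f i j (s + t) = ∑' k : ℕ, f i (k + 1) s * f (k + 1) j t)
    (hsub : SubStochastic fun i j t => ENNReal.ofReal (f (i + 1) (j + 1) t)) :
    ChapmanKolmogorov fun i j t => ENNReal.ofReal (f (i + 1) (j + 1) t) := by
  intro i j s t hs ht
  have hf : ∀ i j : ℕ, ∀ t, 0 ≤ t → 0 ≤ f (i + 1) (j + 1) t := fun i j =>
    hnonneg (i + 1) (j + 1) (Nat.le_add_left 1 i) (Nat.le_add_left 1 j)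
  have hprod : ∀ k, ENNReal.ofReal (f (i + 1) (k + 1) s * f (k + 1) (j + 1) t)
      = ENNReal.ofReal (f (i + 1) (k + 1) s) * ENNReal.ofReal (f (k + 1) (j + 1) t) :=
    fun k => ENNReal.ofReal_mul (hf i k s hs)
  have hfinite : ∑' k, ENNReal.ofReal (f (i + 1) (k + 1) s * f (k + 1) (j + 1) t) ≠ ∞ := by
    refine ne_top_of_le_ne_top ENNReal.one_ne_top ?_
    calc ∑' k, ENNReal.ofReal (f (i + 1) (k + 1) s * f (k + 1) (j + 1) t)
        ≤ ∑' k, ENNReal.ofReal (f (i + 1) (k + 1) s) := by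
          simp_rw [hprod]
          exact ENNReal.tsum_le_tsum fun k => mul_le_of_le_one_right' (hsub.le_one k j ht)
      _ ≤ 1 := hsub i s hs
  have hnn : ∀ k, 0 ≤ f (i + 1) (k + 1) s * f (k + 1) (j + 1) t := fun k =>
    mul_nonneg (hf i k s hs) (hf k j t ht)
  beta_reduce
  rw [hCK (i + 1) (j + 1) (Nat.le_add_left 1 i) (Nat.le_add_left 1 j) s t hs ht,
    ENNReal.ofReal_tsum_of_nonneg hnn (summable_of_tsum_ofReal_ne_top hnn hfinite)]
  exact tsum_congr hprod

theorem stmt_10 (f : ℕ → ℕ → ℝ → ℝ)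
    (hnonneg : ∀ i j : ℕ, 1 ≤ i → 1 ≤ j → ∀ t : ℝ, 0 ≤ t → 0 ≤ f i j t)
    (hCK : ∀ i j : ℕ, 1 ≤ i → 1 ≤ j → ∀ s t : ℝ, 0 ≤ s → 0 ≤ t →
      f i j (s + t) = ∑' k : ℕ, f i (k + 1) s * f (k + 1) j t)
    (hsub : ∀ i : ℕ, 1 ≤ i → ∀ t : ℝ, 0 ≤ t →
      ∑' j : ℕ, ENNReal.ofReal (f i (j + 1) t) ≤ 1)
    (hpos : ∀ n : ℕ, 1 ≤ n → ∀ u : ℝ, 0 < u → 0 < f 1 n u)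
    (ttilde : ℝ) (httilde : 0 < ttilde)
    (hlt : ∑' j : ℕ, ENNReal.ofReal (f 1 (j + 1) ttilde) < 1) :
    ∀ t : ℝ, 0 < t → ∑' j : ℕ, ENNReal.ofReal (f 1 (j + 1) t) < 1 := by
  have hsub' : SubStochastic fun i j t => ENNReal.ofReal (f (i + 1) (j + 1) t) :=
    fun i => hsub (i + 1) (Nat.le_add_left 1 i)
  have hpos' : ∀ k u, 0 < u → ENNReal.ofReal (f 1 (k + 1) u) ≠ 0 := fun k u hu =>
    (ENNReal.ofReal_pos.2 (hpos (k + 1) (Nat.le_add_left 1 k) u hu)).ne'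
  intro t ht
  exact (chapmanKolmogorov_ofReal f hnonneg hCK hsub').tsum_lt_one hsub' hpos' httilde.le hlt ht
end
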